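/- arXiv:2506.09112 — 2 statements merged into one kernel-verified Lean document; each statement's English description precedes it below -/
import Mathlib

section
/- Let P(z) = Σ_{j=0}^m A_j z^j be a matrix polynomial with A_m invertible, k ≥ 1, t > 0, satisfying k t^m ‖A_m‖_F ≥ t^{m-1}‖A_{m-1}‖_F ≥ ... ≥ t‖A_1‖_F ≥ ‖A_0‖_F, and suppose all A_j make angle at most α ≤ π/2 with some fixed nonzero matrix C. Then every eigenvalue z of P satisfies |z + kt − t| ≤ t‖A_m^{-1}‖_F [ (k‖A_m‖_F − ‖A_0‖_F/t^m)(sin α + cos α) + ‖A_0‖_F/t^m + 2 sin α Σ_{j=0}^{m-1} ‖A_j‖_F t^{j−m} ]. -/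
noncomputable def frobNorm {n : ℕ} (A : Matrix (Fin n) (Fin n) ℂ) : ℝ :=
  Real.sqrt (∑ i, ∑ j, ‖A i j‖ ^ 2)

/-!
Let `B` be the coefficient sequence with `A m` replaced by `k • A m`. Summation by parts gives
`(z - 1) P(z) = z^m (z + k - 1) A_m - S(z)` with `S(z) = B_0 + ∑_{j<m} z^(j+1) (B_{j+1} - B_j)`.
For an eigenvalue `z` with `|z| ≥ 1` this makes `z^m (z + k - 1)` an eigenvalue of `A_m⁻¹ S(z)`,
so `|z + k - 1| ≤ ‖A_m⁻¹‖ (‖B_0‖ + ∑ ‖B_{j+1} - B_j‖)`; for `|z| < 1` the same bound follows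
from `‖A_m⁻¹‖ ‖A_m‖ ≥ 1`. Consecutive `B_j` have increasing norms and make an angle at most `2α`
with each other, so the law of cosines bounds `‖B_{j+1} - B_j‖` by
`(‖B_{j+1}‖ - ‖B_j‖) cos α + (‖B_{j+1}‖ + ‖B_j‖) sin α`, and the sum telescopes.
The scaled statement is this case `t = 1` applied to `P(t z)`.
-/

open Real Matrix InnerProductGeometry

attribute [local instance] Matrix.frobeniusNormedAddCommGroup Matrix.frobeniusNormedSpace

lemma one_le_sin_add_cos {α : ℝ} (hα0 : 0 ≤ α) (hα : α ≤ π / 2) : 1 ≤ sin α + cos α := by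
  have hs : 0 ≤ sin α := sin_nonneg_of_nonneg_of_le_pi hα0 (by linarith [pi_pos])
  have hc : 0 ≤ cos α := cos_nonneg_of_mem_Icc ⟨by linarith [pi_pos], hα⟩
  nlinarith [sin_sq_add_cos_sq α, mul_nonneg hs hc]

section InnerProductSpace

variable {V : Type*} [NormedAddCommGroup V] [InnerProductSpace ℝ V] {c x y : V} {α : ℝ}

lemma angle_le_of_mul_cos_le_inner (hc : c ≠ 0) (hx : x ≠ 0) (hα0 : 0 ≤ α)
    (h : ‖x‖ * ‖c‖ * cos α ≤ inner ℝ c x) : angle c x ≤ α := by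
  have hcx : 0 < ‖c‖ * ‖x‖ := by positivity
  by_contra! hlt
  have := cos_lt_cos_of_nonneg_of_le_pi hα0 (angle_le_pi c x) hlt
  rw [cos_angle, div_lt_iff₀ hcx] at this
  linarith

lemma norm_sub_le_of_angle_le (hα0 : 0 ≤ α) (hα : α ≤ π / 2) (hxy : angle x y ≤ 2 * α)
    (hyx : ‖y‖ ≤ ‖x‖) :
    ‖x - y‖ ≤ (‖x‖ - ‖y‖) * cos α + (‖x‖ + ‖y‖) * sin α := by
  have hs : 0 ≤ sin α := sin_nonneg_of_nonneg_of_le_pi hα0 (by linarith [pi_pos])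
  have hc : 0 ≤ cos α := cos_nonneg_of_mem_Icc ⟨by linarith [pi_pos], hα⟩
  have hcos : cos (2 * α) ≤ cos (angle x y) :=
    cos_le_cos_of_nonneg_of_le_pi (angle_nonneg x y) (by linarith) hxy
  have hcos_law := norm_sub_sq_eq_norm_sq_add_norm_sq_sub_two_mul_norm_mul_norm_mul_cos_angle x y
  rw [cos_two_mul'] at hcos
  -- The square of the right side exceeds the cosine-law bound with `cos (2α)` by
  -- `2 (‖x‖² - ‖y‖²) sin α cos α ≥ 0`.
  refine abs_le_of_sq_le_sq' ?_ (by positivity) |>.2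
  nlinarith [sin_sq_add_cos_sq α, mul_nonneg (norm_nonneg x) (norm_nonneg y),
    mul_le_mul_of_nonneg_left hcos (mul_nonneg (norm_nonneg x) (norm_nonneg y)),
    mul_nonneg (mul_nonneg hs hc) (sub_nonneg.2 hyx), norm_nonneg y]

lemma norm_sub_le_of_mul_cos_le_inner (hc : c ≠ 0) (hα0 : 0 ≤ α) (hα : α ≤ π / 2)
    (hx : ‖x‖ * ‖c‖ * cos α ≤ inner ℝ c x) (hy : ‖y‖ * ‖c‖ * cos α ≤ inner ℝ c y)
    (hyx : ‖y‖ ≤ ‖x‖) :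
    ‖x - y‖ ≤ (‖x‖ - ‖y‖) * cos α + (‖x‖ + ‖y‖) * sin α := by
  rcases eq_or_ne y 0 with rfl | hy0
  · simpa [← mul_add, add_comm (cos α)] using
      le_mul_of_one_le_right (norm_nonneg x) (one_le_sin_add_cos hα0 hα)
  have hx0 : x ≠ 0 := norm_pos_iff.1 ((norm_pos_iff.2 hy0).trans_le hyx)
  refine norm_sub_le_of_angle_le hα0 hα ?_ hyx
  calc angle x y ≤ angle x c + angle c y := angle_le_angle_add_angle x c y
    _ ≤ 2 * α := by
      rw [angle_comm x c]
      linarith [angle_le_of_mul_cos_le_inner hc hx0 hα0 hx,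
        angle_le_of_mul_cos_le_inner hc hy0 hα0 hy]

end InnerProductSpace

section FrobeniusAngle

variable {ι κ : Type*} [Fintype ι] [Fintype κ]

def frobeniusL2 (A : Matrix ι κ ℂ) : PiLp 2 fun _ : ι => EuclideanSpace ℂ κ :=
  WithLp.toLp 2 fun i => WithLp.toLp 2 (A i)

lemma inner_frobeniusL2 (C A : Matrix ι κ ℂ) :
    inner ℂ (frobeniusL2 C) (frobeniusL2 A) = trace (Cᴴ * A) := by
  simp only [frobeniusL2, PiLp.inner_apply, RCLike.inner_apply, trace, diag, mul_apply,
    conjTranspose_apply]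
  rw [Finset.sum_comm]
  simp [mul_comm]

/-- Cosine form of "the Frobenius angle between `C` and `A` is at most `α`"; the zero matrix
satisfies it for every `α`. -/
def WithinAngle (C : Matrix ι κ ℂ) (α : ℝ) (A : Matrix ι κ ℂ) : Prop :=
  ‖A‖ * ‖C‖ * cos α ≤ (trace (Cᴴ * A)).re

variable {C X Y : Matrix ι κ ℂ} {α : ℝ}

lemma WithinAngle.ofReal_smul (h : WithinAngle C α X) {r : ℝ} (hr : 0 ≤ r) :
    WithinAngle C α ((r : ℂ) • X) := by
  rw [WithinAngle, norm_smul, Complex.norm_real, norm_of_nonneg hr, Matrix.mul_smul,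
    trace_smul, smul_eq_mul, Complex.re_ofReal_mul, mul_assoc, mul_assoc]
  exact mul_le_mul_of_nonneg_left (by rwa [← mul_assoc]) hr

lemma WithinAngle.norm_sub_le (hC : C ≠ 0) (hα0 : 0 ≤ α) (hα : α ≤ π / 2)
    (hX : WithinAngle C α X) (hY : WithinAngle C α Y) (hYX : ‖Y‖ ≤ ‖X‖) :
    ‖X - Y‖ ≤ (‖X‖ - ‖Y‖) * cos α + (‖X‖ + ‖Y‖) * sin α := by
  let := InnerProductSpace.rclikeToReal ℂ (PiLp 2 fun _ : ι => EuclideanSpace ℂ κ)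
  have hC' : frobeniusL2 C ≠ 0 := norm_pos_iff.1 (norm_pos_iff.2 hC : 0 < ‖C‖)
  have hinner (A : Matrix ι κ ℂ) :
      inner ℝ (frobeniusL2 C) (frobeniusL2 A) = (trace (Cᴴ * A)).re := by
    rw [real_inner_eq_re_inner ℂ, inner_frobeniusL2]
    rfl
  exact norm_sub_le_of_mul_cos_le_inner hC' hα0 hα (x := frobeniusL2 X) (y := frobeniusL2 Y)
    (by rw [hinner]; exact hX) (by rw [hinner]; exact hY) hYX

end FrobeniusAngle

def scaleAt {R M : Type*} [SMul R M] (A : ℕ → M) (m : ℕ) (k : R) : ℕ → M :=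
  Function.update A m (k • A m)

theorem one_sub_smul_sum_pow_smul {R M : Type*} [CommRing R] [AddCommGroup M] [Module R M]
    (z : R) (B : ℕ → M) (m : ℕ) :
    (1 - z) • ∑ j ∈ Finset.range (m + 1), z ^ j • B j
      = B 0 + ∑ j ∈ Finset.range m, z ^ (j + 1) • (B (j + 1) - B j) - z ^ (m + 1) • B m := by
  induction m with
  | zero => simp [sub_smul]
  | succ m ih =>
    rw [Finset.sum_range_succ, smul_add, ih, Finset.sum_range_succ]
    module

theorem sub_one_smul_sum_pow_smul {R M : Type*} [CommRing R] [AddCommGroup M] [Module R M]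
    (z k : R) (A : ℕ → M) (m : ℕ) :
    let B := scaleAt A m k
    (z - 1) • ∑ j ∈ Finset.range (m + 1), z ^ j • A j
      = (z ^ m * (z + k - 1)) • A m
        - (B 0 + ∑ j ∈ Finset.range m, z ^ (j + 1) • (B (j + 1) - B j)) := by
  intro B
  have hBm : B m = k • A m := Function.update_self ..
  have hsum : ∑ j ∈ Finset.range (m + 1), z ^ j • B j
      = ∑ j ∈ Finset.range (m + 1), z ^ j • A j + (z ^ m * (k - 1)) • A m := by
    rw [Finset.sum_range_succ, Finset.sum_range_succ, hBm,
      Finset.sum_congr rfl fun j hj => by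
        rw [show B j = A j from Function.update_of_ne (Finset.mem_range.1 hj).ne ..]]
    module
  have := one_sub_smul_sum_pow_smul z B m
  rw [hsum, hBm] at this
  linear_combination (norm := module) -this

def coeffVariation {E : Type*} [SeminormedAddCommGroup E] (B : ℕ → E) (m : ℕ) : ℝ :=
  ‖B 0‖ + ∑ j ∈ Finset.range m, ‖B (j + 1) - B j‖

theorem norm_le_coeffVariation {E : Type*} [SeminormedAddCommGroup E] (B : ℕ → E) (m : ℕ) :
    ‖B m‖ ≤ coeffVariation B m := by
  calc ‖B m‖ = ‖B 0 + ∑ j ∈ Finset.range m, (B (j + 1) - B j)‖ := by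
        rw [Finset.sum_range_sub, add_sub_cancel]
    _ ≤ coeffVariation B m := (norm_add_le _ _).trans (add_le_add le_rfl (norm_sum_le _ _))

theorem norm_add_sum_pow_smul_le {𝕜 E : Type*} [NormedField 𝕜] [SeminormedAddCommGroup E]
    [NormedSpace 𝕜 E] {z : 𝕜} (hz : 1 ≤ ‖z‖) (x : E) (d : ℕ → E) (m : ℕ) :
    ‖x + ∑ j ∈ Finset.range m, z ^ (j + 1) • d j‖
      ≤ ‖z‖ ^ m * (‖x‖ + ∑ j ∈ Finset.range m, ‖d j‖) := by
  have hpow : ∀ j ∈ Finset.range m, ‖z‖ ^ (j + 1) * ‖d j‖ ≤ ‖z‖ ^ m * ‖d j‖ := fun j hj =>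
    mul_le_mul_of_nonneg_right (pow_le_pow_right₀ hz (Finset.mem_range.1 hj)) (norm_nonneg _)
  calc ‖x + ∑ j ∈ Finset.range m, z ^ (j + 1) • d j‖
      ≤ ‖x‖ + ∑ j ∈ Finset.range m, ‖z ^ (j + 1) • d j‖ :=
        (norm_add_le _ _).trans (add_le_add le_rfl (norm_sum_le _ _))
    _ = ‖x‖ + ∑ j ∈ Finset.range m, ‖z‖ ^ (j + 1) * ‖d j‖ := by
        simp only [norm_smul, norm_pow]
    _ ≤ ‖z‖ ^ m * ‖x‖ + ∑ j ∈ Finset.range m, ‖z‖ ^ m * ‖d j‖ :=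
        add_le_add (le_mul_of_one_le_left (norm_nonneg _) (one_le_pow₀ hz))
          (Finset.sum_le_sum hpow)
    _ = ‖z‖ ^ m * (‖x‖ + ∑ j ∈ Finset.range m, ‖d j‖) := by rw [mul_add, Finset.mul_sum]

section Eigenvalue

variable {𝕜 ι : Type*} [RCLike 𝕜] [Fintype ι]

theorem norm_le_norm_of_mulVec_eq_smul {M : Matrix ι ι 𝕜} {v : ι → 𝕜} {μ : 𝕜} (hv : v ≠ 0)
    (h : M *ᵥ v = μ • v) : ‖μ‖ ≤ ‖M‖ := by
  have hV : 0 < ‖replicateCol (Fin 1) v‖ :=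
    norm_pos_iff.2 (by simpa [replicateCol_eq_zero] using hv)
  have := frobenius_norm_mul M (replicateCol (Fin 1) v)
  rw [← replicateCol_mulVec, h, replicateCol_smul, norm_smul] at this
  exact le_of_mul_le_mul_right this hV

variable [DecidableEq ι]

theorem one_le_norm_inv_mul_norm [Nonempty ι] {A : Matrix ι ι 𝕜} (hA : IsUnit A.det) :
    1 ≤ ‖A⁻¹‖ * ‖A‖ := by
  have h : (A⁻¹ * A) *ᵥ (fun _ => 1) = (1 : 𝕜) • fun _ => 1 := by
    rw [nonsing_inv_mul _ hA, one_mulVec, one_smul]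
  simpa using (norm_le_norm_of_mulVec_eq_smul (by simp [funext_iff]) h).trans
    (frobenius_norm_mul _ _)

theorem norm_add_sub_one_le_of_mulVec_eq_zero {A : ℕ → Matrix ι ι 𝕜} {m : ℕ}
    (hA : IsUnit (A m).det) (k : 𝕜) {z : 𝕜} (hz : 1 ≤ ‖z‖) {v : ι → 𝕜} (hv : v ≠ 0)
    (hPv : (∑ j ∈ Finset.range (m + 1), z ^ j • A j) *ᵥ v = 0) :
    ‖z + k - 1‖ ≤ ‖(A m)⁻¹‖ * coeffVariation (scaleAt A m k) m := by
  set B := scaleAt A m k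
  set S := B 0 + ∑ j ∈ Finset.range m, z ^ (j + 1) • (B (j + 1) - B j)
  have hS : S = (z ^ m * (z + k - 1)) • A m
      - (z - 1) • ∑ j ∈ Finset.range (m + 1), z ^ j • A j := by
    rw [sub_one_smul_sum_pow_smul z k A m, sub_sub_cancel]
  have heig : ((A m)⁻¹ * S) *ᵥ v = (z ^ m * (z + k - 1)) • v := by
    rw [hS, Matrix.mul_sub, Matrix.mul_smul, Matrix.mul_smul, nonsing_inv_mul _ hA, sub_mulVec,
      smul_mulVec, smul_mulVec, ← mulVec_mulVec, hPv, mulVec_zero, smul_zero, sub_zero,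
      one_mulVec]
  have hzm : 0 < ‖z‖ ^ m := pow_pos (one_pos.trans_le hz) m
  refine le_of_mul_le_mul_left ?_ hzm
  calc ‖z‖ ^ m * ‖z + k - 1‖ = ‖z ^ m * (z + k - 1)‖ := by rw [norm_mul, norm_pow]
    _ ≤ ‖(A m)⁻¹ * S‖ := norm_le_norm_of_mulVec_eq_smul hv heig
    _ ≤ ‖(A m)⁻¹‖ * ‖S‖ := frobenius_norm_mul _ _
    _ ≤ ‖(A m)⁻¹‖ * (‖z‖ ^ m * coeffVariation B m) :=
        mul_le_mul_of_nonneg_left (norm_add_sum_pow_smul_le hz _ _ m) (norm_nonneg _)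
    _ = ‖z‖ ^ m * (‖(A m)⁻¹‖ * coeffVariation B m) := by ring

theorem norm_add_sub_one_le_of_det_eq_zero {A : ℕ → Matrix ι ι 𝕜} {m : ℕ}
    (hA : IsUnit (A m).det) {k : ℝ} (hk : 1 ≤ k) {z : 𝕜}
    (hz : (∑ j ∈ Finset.range (m + 1), z ^ j • A j).det = 0) :
    ‖z + k - 1‖ ≤ ‖(A m)⁻¹‖ * coeffVariation (scaleAt A m (k : 𝕜)) m := by
  obtain ⟨v, hv, hPv⟩ := exists_mulVec_eq_zero_iff.2 hz
  rcases le_or_gt 1 ‖z‖ with hz1 | hz1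
  · exact norm_add_sub_one_le_of_mulVec_eq_zero hA k hz1 hv hPv
  have : Nonempty ι := (Function.ne_iff.1 hv).nonempty
  calc ‖z + k - 1‖ ≤ ‖z‖ + ‖((k - 1 : ℝ) : 𝕜)‖ := by
        push_cast
        rw [add_sub_assoc]
        exact norm_add_le _ _
    _ ≤ k * (‖(A m)⁻¹‖ * ‖A m‖) := by
        rw [RCLike.norm_ofReal, abs_of_nonneg (by linarith)]
        nlinarith [one_le_norm_inv_mul_norm hA]
    _ = ‖(A m)⁻¹‖ * ‖scaleAt A m (k : 𝕜) m‖ := by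
        rw [scaleAt, Function.update_self, norm_smul, RCLike.norm_ofReal,
          abs_of_nonneg (by linarith)]
        ring
    _ ≤ ‖(A m)⁻¹‖ * coeffVariation (scaleAt A m (k : 𝕜)) m :=
        mul_le_mul_of_nonneg_left (norm_le_coeffVariation _ m) (norm_nonneg _)

theorem norm_inv_ofReal_smul {A : Matrix ι ι ℂ} (hA : IsUnit A.det) {r : ℝ} (hr : 0 < r) :
    ‖((r : ℂ) • A)⁻¹‖ = ‖A⁻¹‖ / r := by
  have hrc : (r : ℂ) ≠ 0 := Complex.ofReal_ne_zero.2 hr.ne'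
  have : ((r : ℂ) • A)⁻¹ = (r : ℂ)⁻¹ • A⁻¹ :=
    inv_eq_left_inv (by rw [smul_mul_smul_comm, inv_mul_cancel₀ hrc, nonsing_inv_mul _ hA, one_smul])
  rw [this, norm_smul, norm_inv, Complex.norm_real, norm_of_nonneg hr.le, inv_mul_eq_div]

end Eigenvalue

theorem coeffVariation_le_of_withinAngle {ι κ : Type*} [Fintype ι] [Fintype κ]
    {C : Matrix ι κ ℂ} {α : ℝ} {B : ℕ → Matrix ι κ ℂ} {m : ℕ} (hC : C ≠ 0)
    (hα0 : 0 ≤ α) (hα : α ≤ π / 2) (hangle : ∀ j ≤ m, WithinAngle C α (B j))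
    (hmono : ∀ j < m, ‖B j‖ ≤ ‖B (j + 1)‖) :
    coeffVariation B m ≤ (‖B m‖ - ‖B 0‖) * (sin α + cos α) + ‖B 0‖
      + 2 * sin α * ∑ j ∈ Finset.range m, ‖B j‖ := by
  have hstep : ∀ j ∈ Finset.range m, ‖B (j + 1) - B j‖
      ≤ (‖B (j + 1)‖ - ‖B j‖) * cos α + (‖B (j + 1)‖ + ‖B j‖) * sin α := fun j hj =>
    have hj : j < m := Finset.mem_range.1 hj
    (hangle (j + 1) hj).norm_sub_le hC hα0 hα (hangle j hj.le) (hmono j hj)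
  have h1 := Finset.sum_range_succ (fun j => ‖B j‖) m
  have h2 := Finset.sum_range_succ' (fun j => ‖B j‖) m
  have h3 := Finset.sum_range_sub (fun j => ‖B j‖) m
  calc coeffVariation B m
      ≤ ‖B 0‖ + ∑ j ∈ Finset.range m,
          ((‖B (j + 1)‖ - ‖B j‖) * cos α + (‖B (j + 1)‖ + ‖B j‖) * sin α) :=
        add_le_add le_rfl (Finset.sum_le_sum hstep)
    _ = _ := by
        simp only [Finset.sum_add_distrib, ← Finset.sum_mul, h3]
        linear_combination sin α * (h1 - h2)

theorem matrixPoly_eigenvalue_bound_shah_liman {ι : Type*} [Fintype ι] [DecidableEq ι] {m : ℕ}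
    (hm : 0 < m) {A : ℕ → Matrix ι ι ℂ} (hA : IsUnit (A m).det) {k : ℝ} (hk : 1 ≤ k)
    (htop : ‖A (m - 1)‖ ≤ k * ‖A m‖) (hchain : ∀ j, j + 1 < m → ‖A j‖ ≤ ‖A (j + 1)‖)
    {α : ℝ} (hα0 : 0 ≤ α) (hα : α ≤ π / 2) {C : Matrix ι ι ℂ} (hC : C ≠ 0)
    (hangle : ∀ j ≤ m, WithinAngle C α (A j)) {z : ℂ}
    (hz : (∑ j ∈ Finset.range (m + 1), z ^ j • A j).det = 0) :
    ‖z + k - 1‖ ≤ ‖(A m)⁻¹‖ * ((k * ‖A m‖ - ‖A 0‖) * (sin α + cos α) + ‖A 0‖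
      + 2 * sin α * ∑ j ∈ Finset.range m, ‖A j‖) := by
  set B := scaleAt A m (k : ℂ)
  have hBlt : ∀ j < m, B j = A j := fun j hj => Function.update_of_ne hj.ne ..
  have hBm : B m = (k : ℂ) • A m := Function.update_self ..
  have hnormBm : ‖B m‖ = k * ‖A m‖ := by
    rw [hBm, norm_smul, Complex.norm_real, norm_of_nonneg (by linarith)]
  have hmono : ∀ j < m, ‖B j‖ ≤ ‖B (j + 1)‖ := by
    intro j hj
    rcases (Nat.succ_le_of_lt hj).lt_or_eq with hj1 | rfl
    · rw [hBlt j hj, hBlt (j + 1) hj1]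
      exact hchain j hj1
    · rw [hnormBm, hBlt j hj]
      simpa using htop
  have hBangle : ∀ j ≤ m, WithinAngle C α (B j) := by
    intro j hj
    rcases hj.lt_or_eq with hj | rfl
    · rw [hBlt j hj]
      exact hangle j hj.le
    · rw [hBm]
      exact (hangle j le_rfl).ofReal_smul (by linarith)
  have hvar := coeffVariation_le_of_withinAngle hC hα0 hα hBangle hmono
  rw [hnormBm, hBlt 0 hm, Finset.sum_congr rfl fun j hj => by
    rw [hBlt j (Finset.mem_range.1 hj)]] at hvar
  exact (norm_add_sub_one_le_of_det_eq_zero hA hk hz).trans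
    (mul_le_mul_of_nonneg_left hvar (norm_nonneg _))

lemma frobNorm_eq_norm {n : ℕ} (A : Matrix (Fin n) (Fin n) ℂ) : frobNorm A = ‖A‖ := by
  rw [frobNorm, frobenius_norm_def, sqrt_eq_rpow]
  simp only [rpow_two]

/-- Corollary 1: if `k ≥ 1`, `t > 0`,
`k t^m ‖A_m‖_F ≥ t^{m-1}‖A_{m-1}‖_F ≥ ⋯ ≥ t‖A_1‖_F ≥ ‖A_0‖_F`, and all `A_j` make an
angle at most `α ≤ π/2` with some nonzero matrix `C`, then every eigenvalue `z` of `P`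
satisfies `|z + kt − t| ≤ t‖A_m⁻¹‖_F [(k‖A_m‖_F − ‖A_0‖_F/t^m)(sin α + cos α)
  + ‖A_0‖_F/t^m + 2 sin α ∑_{j=0}^{m-1} ‖A_j‖_F t^{j−m}]`. -/
theorem matrixPoly_eigenvalue_bound_shah_liman_scaled {n : ℕ} (m : ℕ) (hm : 0 < m)
    (A : ℕ → Matrix (Fin n) (Fin n) ℂ) (hA : IsUnit (A m).det)
    (k t : ℝ) (hk : 1 ≤ k) (ht : 0 < t)
    (htop : t ^ (m - 1) * frobNorm (A (m - 1)) ≤ k * t ^ m * frobNorm (A m))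
    (hchain : ∀ j, j + 1 < m →
        t ^ j * frobNorm (A j) ≤ t ^ (j + 1) * frobNorm (A (j + 1)))
    (α : ℝ) (hα0 : 0 ≤ α) (hα : α ≤ Real.pi / 2)
    (C : Matrix (Fin n) (Fin n) ℂ) (hC : C ≠ 0)
    (hangle : ∀ j ≤ m,
        frobNorm (A j) * frobNorm C * Real.cos α
          ≤ (Matrix.trace (C.conjTranspose * A j)).re)
    (z : ℂ)
    (hz : (∑ j ∈ Finset.range (m + 1), z ^ j • A j).det = 0) :
    ‖z + (k : ℂ) * t - t‖
      ≤ t * frobNorm (A m)⁻¹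
          * ((k * frobNorm (A m) - frobNorm (A 0) / t ^ m)
                * (Real.sin α + Real.cos α)
              + frobNorm (A 0) / t ^ m
              + 2 * Real.sin α
                  * ∑ j ∈ Finset.range m, frobNorm (A j) * t ^ ((j : ℤ) - m)) := by
  simp only [frobNorm_eq_norm] at *
  set A' : ℕ → Matrix (Fin n) (Fin n) ℂ := fun j => ((t ^ j : ℝ) : ℂ) • A j
  have htc : (t : ℂ) ≠ 0 := Complex.ofReal_ne_zero.2 ht.ne'
  have hnorm (j : ℕ) : ‖A' j‖ = t ^ j * ‖A j‖ := by
    rw [norm_smul, Complex.norm_real, norm_of_nonneg (pow_pos ht j).le]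
  have hA' : IsUnit (A' m).det := by
    rw [det_smul, Complex.ofReal_pow]
    exact ((isUnit_iff_ne_zero.2 (pow_ne_zero m htc)).pow _).mul hA
  have hz' : (∑ j ∈ Finset.range (m + 1), (z / t) ^ j • A' j).det = 0 := by
    rw [← hz]
    congr 1
    refine Finset.sum_congr rfl fun j _ => ?_
    rw [smul_smul, Complex.ofReal_pow, ← mul_pow, div_mul_cancel₀ _ htc]
  have key := matrixPoly_eigenvalue_bound_shah_liman hm hA' hk
    (by rw [hnorm, hnorm]; linarith) (fun j hj => by rw [hnorm, hnorm]; exact hchain j hj)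
    hα0 hα hC (fun j hj => WithinAngle.ofReal_smul (hangle j hj) (pow_pos ht j).le) hz'
  have hinv : ‖(A' m)⁻¹‖ = ‖(A m)⁻¹‖ / t ^ m := norm_inv_ofReal_smul hA (pow_pos ht m)
  simp only [hinv, hnorm, pow_zero, one_mul] at key
  have hzpow (j : ℕ) : t ^ ((j : ℤ) - m) = t ^ j / t ^ m := by
    rw [zpow_sub₀ ht.ne', zpow_natCast, zpow_natCast]
  have hscale : z + (k : ℂ) * t - t = (t : ℂ) * (z / t + k - 1) := by field_simp
  rw [hscale, norm_mul, Complex.norm_real, norm_of_nonneg ht.le]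
  simp only [hzpow, mul_div_assoc', mul_comm ‖A _‖ (t ^ _), ← Finset.sum_div]
  calc t * ‖z / t + k - 1‖ ≤ t * (‖(A m)⁻¹‖ / t ^ m * _) := mul_le_mul_of_nonneg_left key ht.le
    _ = _ := by field_simp
end

section
/- Let P(z) = Σ_{k=0}^m A_k z^k be a matrix polynomial with A_m invertible. Set r₂ = max_{1 ≤ k ≤ m} { 2^{3(m−1)} C(2m, m+k)^{-1} 𝒫_k^{-2} ‖A_{m−k}‖ ‖A_m^{-1}‖ }^{1/k}, where 𝒫_k is the k-th Pell number. Then every eigenvalue λ of P satisfies |λ| ≤ r₂. -/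
/-!
Write `P(λ) = λ^m A_m (I + B)` with `B = ∑_{k=1}^m λ^{-k} A_m⁻¹ A_{m-k}`. If `|λ| > r₂`, then
`‖A_{m-k}‖ ‖A_m⁻¹‖ |λ|^{-k} < c_k := C(2m, m+k) 𝒫_k² / 8^{m-1}` for each `k`, and these weights
sum to `1`, so `‖B‖ < 1`, `I + B` is invertible and `det P(λ) ≠ 0`.

The weights sum to `1` by `∑_{k=1}^m C(2m, m+k) 𝒫_k² = 8^{m-1}`. With `α, β = 1 ± √2` we have
`8 𝒫_d² = (α^d - β^d)² = (α^j β^m - β^j α^m)²` for `d = |j - m|`, because `(αβ)² = 1`. Summing the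
right-hand side against `C(2m, j)` over `0 ≤ j ≤ 2m` gives, by the binomial theorem,
`((α² + 1)² β²)^m + ((β² + 1)² α²)^m - 2 ((αβ + 1)² αβ)^m = 8^m + 8^m - 0`, while folding the
left-hand side around `j = m` gives `16 ∑_{k=1}^m C(2m, m+k) 𝒫_k²`.
-/

def pell : ℕ → ℕ
  | 0 => 0
  | 1 => 1
  | (n + 2) => 2 * pell (n + 1) + pell n

noncomputable def opNorm {n : ℕ} (A : Matrix (Fin n) (Fin n) ℂ) : ℝ :=
  ‖Matrix.toEuclideanCLM (𝕜 := ℂ) A‖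

open Finset

theorem pell_pos {k : ℕ} (hk : 0 < k) : 0 < pell k := by
  induction k using Nat.twoStepInduction with
  | zero => exact absurd hk (lt_irrefl 0)
  | one => decide
  | more k _ ih => exact Nat.add_pos_left (Nat.mul_pos two_pos (ih k.succ_pos)) _

theorem pell_binet (k : ℕ) :
    (1 + √2) ^ k - (1 - √2) ^ k = 2 * √2 * pell k := by
  induction k using Nat.twoStepInduction with
  | zero => simp [pell]
  | one => simp [pell]; ring
  | more k ih₀ ih₁ =>
    have hs : √2 ^ 2 = 2 := Real.sq_sqrt zero_le_two
    rw [pell]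
    push_cast
    linear_combination ((1 + √2) ^ k - (1 - √2) ^ k) * hs + 2 * ih₁ + ih₀

theorem sum_range_choose_smul_dist {M : Type*} [AddCommMonoid M] (f : ℕ → M) (m : ℕ) :
    ∑ j ∈ range (2 * m + 1), (2 * m).choose j • f (Nat.dist j m)
      = (2 * m).choose m • f 0 + 2 • ∑ k ∈ Icc 1 m, (2 * m).choose (m + k) • f k := by
  have hlow : ∑ j ∈ range m, (2 * m).choose j • f (Nat.dist j m)
      = ∑ k ∈ Icc 1 m, (2 * m).choose (m + k) • f k := by
    refine sum_nbij' (m - ·) (m - ·) ?_ ?_ ?_ ?_ fun j hj => ?_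
    any_goals intro j hj; simp only [mem_range, mem_Icc] at hj ⊢; omega
    rw [mem_range] at hj
    rw [← Nat.choose_symm (by omega), show 2 * m - j = m + (m - j) by omega,
      show Nat.dist j m = m - j by simp [Nat.dist]; omega]
  have hhigh : ∑ i ∈ range m, (2 * m).choose (m + (i + 1)) • f (Nat.dist (m + (i + 1)) m)
      = ∑ k ∈ Icc 1 m, (2 * m).choose (m + k) • f k := by
    refine sum_nbij' (· + 1) (· - 1) ?_ ?_ ?_ ?_ fun j _ => ?_
    any_goals intro j hj; simp only [mem_range, mem_Icc] at hj ⊢; omega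
    rw [show Nat.dist (m + (j + 1)) m = j + 1 by simp [Nat.dist]]
  rw [show 2 * m + 1 = m + (m + 1) by ring, sum_range_add, sum_range_succ', hlow, hhigh,
    Nat.add_zero, Nat.dist_self, two_nsmul]
  abel

theorem sq_pow_mul_pow_sub_pow_mul_pow {R : Type*} [CommRing R] {x y : R} (hxy : (x * y) ^ 2 = 1)
    (j m : ℕ) :
    (x ^ j * y ^ m - y ^ j * x ^ m) ^ 2 = (x ^ Nat.dist j m - y ^ Nat.dist j m) ^ 2 := by
  wlog h : m ≤ j generalizing x y j m
  · rw [Nat.dist_comm]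
    linear_combination this (x := y) (y := x) (by rwa [mul_comm]) m j (by omega)
  obtain ⟨d, rfl⟩ := Nat.exists_eq_add_of_le h
  have hm : (x * y) ^ (2 * m) = 1 := by rw [pow_mul, hxy, one_pow]
  rw [show Nat.dist (m + d) m = d by simp [Nat.dist]]
  linear_combination (x ^ d - y ^ d) ^ 2 * hm

theorem sum_range_choose_mul_pow_mul_pow {R : Type*} [CommSemiring R] (x y : R) (m : ℕ) :
    ∑ j ∈ range (2 * m + 1), ((2 * m).choose j : R) * (x ^ j * y ^ m) = ((x + 1) ^ 2 * y) ^ m := by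
  rw [mul_pow, ← pow_mul, add_pow, sum_mul]
  refine sum_congr rfl fun j _ => ?_
  rw [one_pow, mul_one]
  ring

theorem sum_choose_mul_pell_sq {m : ℕ} (hm : 0 < m) :
    ∑ k ∈ Icc 1 m, (2 * m).choose (m + k) * pell k ^ 2 = 8 ^ (m - 1) := by
  set a : ℝ := 1 + √2
  set b : ℝ := 1 - √2
  have hs : √2 ^ 2 = 2 := Real.sq_sqrt zero_le_two
  have hab : a * b = -1 := by linear_combination -hs
  have ha : (a ^ 2 + 1) ^ 2 * b ^ 2 = 8 := by
    linear_combination (8 * √2 ^ 2 + (√2 ^ 2 + 4 * √2 + 2) * (1 - √2) ^ 2) * hs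
  have hb : (b ^ 2 + 1) ^ 2 * a ^ 2 = 8 := by
    linear_combination (8 * √2 ^ 2 + (√2 ^ 2 - 4 * √2 + 2) * (1 + √2) ^ 2) * hs
  have hterm : ∀ j, (a ^ j * b ^ m - b ^ j * a ^ m) ^ 2 = 8 * (pell (Nat.dist j m) : ℝ) ^ 2 := by
    intro j
    rw [sq_pow_mul_pow_sub_pow_mul_pow (by rw [hab]; norm_num), pell_binet]
    linear_combination 4 * (pell (Nat.dist j m) : ℝ) ^ 2 * hs
  clear_value a b
  have hsum : ∑ j ∈ range (2 * m + 1), ((2 * m).choose j : ℝ) * (a ^ j * b ^ m - b ^ j * a ^ m) ^ 2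
      = 2 * 8 ^ m := by
    have hexp : ∀ j, ((2 * m).choose j : ℝ) * (a ^ j * b ^ m - b ^ j * a ^ m) ^ 2
        = (2 * m).choose j * ((a ^ 2) ^ j * (b ^ 2) ^ m)
          + (2 * m).choose j * ((b ^ 2) ^ j * (a ^ 2) ^ m)
          - 2 * ((2 * m).choose j * ((a * b) ^ j * (a * b) ^ m)) := fun j => by ring
    simp_rw [hexp, sum_sub_distrib, sum_add_distrib, ← mul_sum, sum_range_choose_mul_pow_mul_pow,
      ha, hb, hab]
    rw [neg_add_cancel, zero_pow two_ne_zero, zero_mul, zero_pow hm.ne', mul_zero, sub_zero,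
      two_mul]
  simp_rw [hterm, mul_left_comm _ (8 : ℝ), ← mul_sum, ← nsmul_eq_mul] at hsum
  rw [sum_range_choose_smul_dist (fun k => (pell k : ℝ) ^ 2)] at hsum
  simp only [pell, Nat.cast_zero, nsmul_eq_mul] at hsum
  have h8 : (8 : ℝ) ^ m = 8 * 8 ^ (m - 1) := by rw [← pow_succ', Nat.sub_add_cancel hm]
  exact_mod_cast (by linear_combination hsum / 16 + h8 / 8 :
    ∑ k ∈ Icc 1 m, ((2 * m).choose (m + k) : ℝ) * pell k ^ 2 = 8 ^ (m - 1))

theorem sum_pow_smul_eq_pow_smul_mul_one_add {K ι : Type*} [Field K] [Fintype ι] [DecidableEq ι]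
    {A : ℕ → Matrix ι ι K} {m : ℕ} (hAm : IsUnit (A m).det) {lam : K} (hlam : lam ≠ 0) :
    ∑ k ∈ range (m + 1), lam ^ k • A k
      = lam ^ m • (A m * (1 + ∑ k ∈ Icc 1 m, lam⁻¹ ^ k • ((A m)⁻¹ * A (m - k)))) := by
  have hmul : A m * (1 + ∑ k ∈ Icc 1 m, lam⁻¹ ^ k • ((A m)⁻¹ * A (m - k)))
      = ∑ k ∈ range (m + 1), lam⁻¹ ^ k • A (m - k) := by
    simp_rw [Matrix.mul_add, Matrix.mul_one, mul_sum, Matrix.mul_smul, ← Matrix.mul_assoc,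
      Matrix.mul_nonsing_inv _ hAm, Matrix.one_mul]
    rw [sum_range_eq_add_Ico _ (by omega : 0 < m + 1), ← Ico_add_one_right_eq_Icc, pow_zero,
      one_smul, Nat.sub_zero]
  rw [hmul, smul_sum, ← sum_range_reflect]
  refine sum_congr rfl fun k hk => ?_
  rw [smul_smul, inv_pow, ← pow_sub₀ _ hlam (Nat.lt_succ_iff.mp (mem_range.mp hk)),
    Nat.add_sub_cancel]

open scoped Matrix.Norms.L2Operator

theorem det_sum_pow_smul_ne_zero {𝕜 ι : Type*} [RCLike 𝕜] [Fintype ι] [DecidableEq ι]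
    {A : ℕ → Matrix ι ι 𝕜} {m : ℕ} (hAm : IsUnit (A m).det) {lam : 𝕜} (hlam : lam ≠ 0)
    (h : ∑ k ∈ Icc 1 m, ‖(A m)⁻¹ * A (m - k)‖ * ‖lam‖⁻¹ ^ k < 1) :
    (∑ k ∈ range (m + 1), lam ^ k • A k).det ≠ 0 := by
  set B := ∑ k ∈ Icc 1 m, lam⁻¹ ^ k • ((A m)⁻¹ * A (m - k))
  have hB : ‖-B‖ < 1 := by
    refine (norm_neg B ▸ norm_sum_le _ _).trans_lt (h.trans_eq' (sum_congr rfl fun k _ => ?_))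
    rw [norm_smul, norm_pow, norm_inv, mul_comm]
  rw [sum_pow_smul_eq_pow_smul_mul_one_add hAm hlam, Matrix.det_smul, Matrix.det_mul]
  refine mul_ne_zero (pow_ne_zero _ (pow_ne_zero _ hlam)) (mul_ne_zero hAm.ne_zero ?_)
  rw [← sub_neg_eq_add]
  exact ((Matrix.isUnit_iff_isUnit_det _).mp (isUnit_one_sub_of_norm_lt_one hB)).ne_zero

theorem opNorm_eq_norm {n : ℕ} (A : Matrix (Fin n) (Fin n) ℂ) : opNorm A = ‖A‖ := rfl

theorem mul_inv_pow_lt_of_div_rpow_lt {b c x : ℝ} {k : ℕ} (hb : 0 ≤ b) (hc : 0 < c) (hk : k ≠ 0)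
    (h : (b / c) ^ ((1 : ℝ) / k) < x) : b * x⁻¹ ^ k < c := by
  have hbc : 0 ≤ b / c := div_nonneg hb hc.le
  have hx : 0 < x := (Real.rpow_nonneg hbc _).trans_lt h
  rw [one_div, Real.rpow_inv_lt_iff_of_pos hbc hx.le (by positivity), Real.rpow_natCast,
    div_lt_iff₀ hc] at h
  rwa [inv_pow, ← div_eq_mul_inv, div_lt_iff₀ (pow_pos hx k), mul_comm]

theorem norm_le_sup'_of_det_sum_pow_smul_eq_zero {𝕜 ι : Type*} [RCLike 𝕜] [Fintype ι]
    [DecidableEq ι] {m : ℕ} (hm : 0 < m) {A : ℕ → Matrix ι ι 𝕜} (hAm : IsUnit (A m).det)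
    {c : ℕ → ℝ} (hc : ∀ k ∈ Icc 1 m, 0 < c k) (hc1 : ∑ k ∈ Icc 1 m, c k ≤ 1) {lam : 𝕜}
    (hlam : (∑ k ∈ range (m + 1), lam ^ k • A k).det = 0) :
    ‖lam‖ ≤ (Icc 1 m).sup' (nonempty_Icc.mpr hm)
      fun k => (‖A (m - k)‖ * ‖(A m)⁻¹‖ / c k) ^ ((1 : ℝ) / k) := by
  by_contra! hlt
  rw [sup'_lt_iff] at hlt
  have hm' : m ∈ Icc 1 m := right_mem_Icc.mpr hm
  have hlam0 : lam ≠ 0 := norm_pos_iff.mp <|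
    (Real.rpow_nonneg (div_nonneg (by positivity) (hc m hm').le) _).trans_lt (hlt m hm')
  have hterm : ∀ k ∈ Icc 1 m, ‖(A m)⁻¹ * A (m - k)‖ * ‖lam‖⁻¹ ^ k < c k := by
    intro k hk
    calc ‖(A m)⁻¹ * A (m - k)‖ * ‖lam‖⁻¹ ^ k ≤ ‖A (m - k)‖ * ‖(A m)⁻¹‖ * ‖lam‖⁻¹ ^ k := by
          gcongr
          exact (norm_mul_le _ _).trans_eq (mul_comm _ _)
      _ < c k := mul_inv_pow_lt_of_div_rpow_lt (by positivity) (hc k hk)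
          (Nat.one_le_iff_ne_zero.mp (mem_Icc.mp hk).1) (hlt k hk)
  exact det_sum_pow_smul_ne_zero hAm hlam0
    ((sum_lt_sum_of_nonempty (nonempty_Icc.mpr hm) hterm).trans_le hc1) hlam

/-- Theorem 3 (upper bound): with `A_m` invertible and
`r₂ = max_{1≤k≤m} {2^{3(m−1)} C(2m,m+k)⁻¹ 𝒫_k⁻² ‖A_{m−k}‖‖A_m⁻¹‖}^{1/k}`, every
eigenvalue `λ` of `P(z) = ∑_k A_k z^k` satisfies `|λ| ≤ r₂`. -/
theorem matrixPoly_eigenvalue_upper_bound_pell {n : ℕ} (m : ℕ) (hm : 0 < m)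
    (A : ℕ → Matrix (Fin n) (Fin n) ℂ) (hAm : IsUnit (A m).det)
    (r₂ : ℝ)
    (hr₂ : r₂ = (Finset.Icc 1 m).sup' (Finset.nonempty_Icc.mpr hm)
        fun k => ((2 : ℝ) ^ ((3 : ℤ) * ((m : ℤ) - 1))
            * ((Nat.choose (2 * m) (m + k) : ℝ))⁻¹ * ((pell k : ℝ) ^ 2)⁻¹
            * opNorm (A (m - k)) * opNorm (A m)⁻¹)
          ^ ((1 : ℝ) / k))
    (lam : ℂ)
    (hlam : (∑ k ∈ Finset.range (m + 1), lam ^ k • A k).det = 0) :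
    ‖lam‖ ≤ r₂ := by
  have h8 : (2 : ℝ) ^ ((3 : ℤ) * ((m : ℤ) - 1)) = 8 ^ (m - 1) := by
    rw [show (3 : ℤ) * ((m : ℤ) - 1) = ((3 * (m - 1) : ℕ) : ℤ) by omega, zpow_natCast, pow_mul]
    norm_num
  set c : ℕ → ℝ := fun k => (2 * m).choose (m + k) * (pell k : ℝ) ^ 2 / 8 ^ (m - 1)
  have hc : ∀ k ∈ Icc 1 m, 0 < c k := fun k hk => by
    rw [mem_Icc] at hk
    exact div_pos (mul_pos (Nat.cast_pos.mpr (Nat.choose_pos (by omega)))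
      (pow_pos (Nat.cast_pos.mpr (pell_pos hk.1)) 2)) (by positivity)
  have hc1 : ∑ k ∈ Icc 1 m, c k = 1 := by
    rw [← sum_div, div_eq_one_iff_eq (by positivity)]
    exact_mod_cast sum_choose_mul_pell_sq hm
  rw [hr₂]
  refine (norm_le_sup'_of_det_sum_pow_smul_eq_zero hm hAm hc hc1.le hlam).trans_eq
    (sup'_congr _ rfl fun k _ => ?_)
  rw [h8, opNorm_eq_norm, opNorm_eq_norm, div_div_eq_mul_div]
  field_simp
end
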